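/- Let ρ ∈ (0,1], θ > 0, and let ν be a Γ-grey noise measure on S' with parameters ρ, θ. Then for every ξ₁, ξ₂ ∈ S, the covariance satisfies ∫_{S'} ⟨ω,ξ₁⟩⟨ω,ξ₂⟩ dν(ω) = (θ^{ρ-1} e^{-θ}/Γ(ρ,θ)) · ⟨ξ₁,ξ₂⟩. In particular, ∫_{S'} ⟨ω,ξ⟩² dν(ω) = θ^{ρ-1} e^{-θ} ‖ξ‖²/Γ(ρ,θ). -/

import Mathlib

open MeasureTheory Real Set

/-- Upper incomplete gamma function `Γ(ρ, x) = ∫_x^∞ e^{-w} w^{ρ-1} dw`. -/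
noncomputable def uGamma (ρ x : ℝ) : ℝ := ∫ w in Set.Ioi x, Real.exp (-w) * w ^ (ρ - 1)

/-- The space `S'`: the topological dual of the Schwartz space `S(ℝ)`,
equipped with the weak-* topology. -/
abbrev SchwartzDual := WeakDual ℝ (SchwartzMap ℝ ℝ)

/-- Borel σ-algebra on `S'` (Borel σ-algebra of the weak-* topology). -/
noncomputable instance : MeasurableSpace SchwartzDual := borel _

instance : BorelSpace SchwartzDual := ⟨rfl⟩

open Filter

lemma uG_integrableOn {ρ x : ℝ} (hρ1 : ρ ≤ 1) (hx : 0 < x) :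
    IntegrableOn (fun w => Real.exp (-w) * w ^ (ρ - 1)) (Ioi x) := by
  have hmeas : Measurable fun w : ℝ => Real.exp (-w) * w ^ (ρ - 1) :=
    (Real.measurable_exp.comp measurable_neg).mul (measurable_id.pow_const _)
  have hint : IntegrableOn (fun w => x ^ (ρ - 1) * Real.exp (-w)) (Ioi x) := by
    have := (exp_neg_integrableOn_Ioi x (b := 1) one_pos).const_mul (x ^ (ρ - 1))
    simp at this; exact this
  refine hint.integrable.mono' hmeas.aestronglyMeasurable ?_
  filter_upwards [ae_restrict_mem measurableSet_Ioi] with w hw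
  have hw' : x ≤ w := le_of_lt hw
  have h0 : (0:ℝ) < w := lt_of_lt_of_le hx hw'
  rw [Real.norm_eq_abs, abs_of_nonneg (by positivity)]
  calc Real.exp (-w) * w ^ (ρ - 1) ≤ Real.exp (-w) * x ^ (ρ - 1) := by
        exact mul_le_mul_of_nonneg_left (Real.rpow_le_rpow_of_nonpos hx hw' (by linarith)) (Real.exp_pos _).le
    _ = x ^ (ρ - 1) * Real.exp (-w) := mul_comm _ _

lemma uGamma_pos {ρ x : ℝ} (hρ1 : ρ ≤ 1) (hx : 0 < x) : 0 < uGamma ρ x := by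
  rw [uGamma, setIntegral_pos_iff_support_of_nonneg_ae]
  · have hsub : Ioi x ⊆ Function.support (fun w => Real.exp (-w) * w ^ (ρ - 1)) ∩ Ioi x := by
      intro w hw
      have h0 : (0:ℝ) < w := lt_trans hx hw
      refine ⟨?_, hw⟩
      simp only [Function.mem_support]
      positivity
    calc (0:ENNReal) < volume (Ioi x) := by simp [Real.volume_Ioi]
      _ ≤ _ := measure_mono hsub
  · filter_upwards [ae_restrict_mem measurableSet_Ioi] with w hw
    have h0 : (0:ℝ) < w := lt_trans hx hw
    positivity
  · exact uG_integrableOn hρ1 hx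

lemma uGamma_hasDerivAt {ρ x : ℝ} (hρ1 : ρ ≤ 1) (hx : 0 < x) :
    HasDerivAt (uGamma ρ) (-(Real.exp (-x) * x ^ (ρ - 1))) x := by
  set f : ℝ → ℝ := fun w => Real.exp (-w) * w ^ (ρ - 1) with hf
  set a : ℝ := x / 2 with ha
  have hax : a < x := by rw [ha]; linarith
  have ha0 : 0 < a := by positivity
  have key : ∀ y ∈ Ioi a, uGamma ρ y = uGamma ρ a - ∫ t in a..y, f t := by
    intro y hy
    have hy' : a ≤ y := le_of_lt hy
    have h1 : IntegrableOn f (Ioc a y) := (uG_integrableOn hρ1 ha0).mono_set Ioc_subset_Ioi_self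
    have h2 : IntegrableOn f (Ioi y) := (uG_integrableOn hρ1 ha0).mono_set (Ioi_subset_Ioi hy')
    have hsplit : ∫ w in Ioi a, f w = (∫ w in Ioc a y, f w) + ∫ w in Ioi y, f w := by
      rw [← setIntegral_union (Ioc_disjoint_Ioi le_rfl) measurableSet_Ioi h1 h2,
        Ioc_union_Ioi_eq_Ioi hy']
    rw [uGamma, uGamma, intervalIntegral.integral_of_le hy']
    show (∫ w in Ioi y, f w) = (∫ w in Ioi a, f w) - ∫ w in Ioc a y, f w
    rw [hsplit]; ring
  have hmeasf : Measurable f :=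
    (Real.measurable_exp.comp measurable_neg).mul (measurable_id.pow_const _)
  have hii : IntervalIntegrable f volume a x := by
    rw [intervalIntegrable_iff_integrableOn_Ioc_of_le (le_of_lt hax)]
    exact (uG_integrableOn hρ1 ha0).mono_set Ioc_subset_Ioi_self
  have hcx : ContinuousAt f x := by
    exact ((Real.continuous_exp.comp continuous_neg).continuousAt).mul
      (Real.continuousAt_rpow_const x _ (Or.inl (ne_of_gt hx)))
  have hderiv : HasDerivAt (fun y => uGamma ρ a - ∫ t in a..y, f t) (-(f x)) x := by
    have := (intervalIntegral.integral_hasDerivAt_right hii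
      (hmeasf.stronglyMeasurable.stronglyMeasurableAtFilter) hcx).const_sub (uGamma ρ a)
    simpa using this
  refine hderiv.congr_of_eventuallyEq ?_
  filter_upwards [Ioi_mem_nhds hax] with y hy
  exact key y hy

lemma one_sub_cos_eq (u : ℝ) : 1 - Real.cos u = 2 * Real.sin (u/2)^2 := by
  have h1 := Real.sin_sq_add_cos_sq (u/2)
  have h2 : Real.cos (u/2)^2 = 1/2 + Real.cos u / 2 := by
    have := Real.cos_sq (u/2)
    rwa [show 2 * (u/2) = u by ring] at this
  linarith

lemma one_sub_cos_le (u : ℝ) : 1 - Real.cos u ≤ u^2/2 := by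
  rw [one_sub_cos_eq]
  have := Real.sin_sq_le_sq (x := u/2)
  nlinarith

lemma one_sub_cos_nonneg (u : ℝ) : 0 ≤ 1 - Real.cos u := by
  have := Real.cos_le_one u; linarith

lemma tendsto_sin_div' : Tendsto (fun s : ℝ => Real.sin s / s) (nhdsWithin 0 {x | x ≠ 0}) (nhds 1) := by
  have h := Real.hasDerivAt_sin 0
  rw [hasDerivAt_iff_tendsto_slope] at h
  rw [Real.cos_zero] at h
  refine h.congr fun s => ?_
  rw [slope_def_field]
  simp

lemma schwartz_bdd (ξ : SchwartzMap ℝ ℝ) : ∃ C, ∀ x, ‖ξ x‖ ≤ C := by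
  obtain ⟨C, hC⟩ := ξ.decay 0 0
  exact ⟨C, fun x => by simpa using hC.2 x⟩

lemma prodInt (ξ₁ ξ₂ : SchwartzMap ℝ ℝ) : Integrable (fun x => ξ₁ x * ξ₂ x) volume := by
  obtain ⟨C, hC⟩ := schwartz_bdd ξ₁
  exact (ξ₂.integrable (μ := volume)).bdd_mul ξ₁.continuous.aestronglyMeasurable (Filter.Eventually.of_forall hC)

lemma moment_aux (ρ θ : ℝ) (hρ : ρ ∈ Set.Ioc (0 : ℝ) 1) (hθ : 0 < θ)
    (ν : Measure SchwartzDual) [IsProbabilityMeasure ν]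
    (hchar : ∀ ξ : SchwartzMap ℝ ℝ,
        ∫ ω, Complex.exp (Complex.I * ((ω ξ : ℝ) : ℂ)) ∂ν
          = ((uGamma ρ (θ + (∫ x, ξ x * ξ x) / 2) / uGamma ρ θ : ℝ) : ℂ))
    (ξ : SchwartzMap ℝ ℝ) :
    Integrable (fun ω => (ω ξ)^2) ν ∧
      ∫ ω, (ω ξ)^2 ∂ν = θ ^ (ρ - 1) * Real.exp (-θ) / uGamma ρ θ * ∫ x, ξ x * ξ x := by
  have hG : 0 < uGamma ρ θ := uGamma_pos hρ.2 hθ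
  set c : ℝ := ∫ x, ξ x * ξ x with hcdef
  have hc0 : 0 ≤ c := integral_nonneg fun x => mul_self_nonneg _
  rcases eq_or_lt_of_le hc0 with hc | hc
  · -- degenerate case : c = 0, so ξ = 0
    have hae : (fun x => ξ x * ξ x) =ᵐ[volume] 0 :=
      (integral_eq_zero_iff_of_nonneg (fun x => mul_self_nonneg _) (prodInt ξ ξ)).mp hc.symm
    have heq : (fun x => ξ x * ξ x) = 0 :=
      (Continuous.ae_eq_iff_eq volume (ξ.continuous.mul ξ.continuous) continuous_zero).mp hae
    have hξ0 : ξ = 0 := by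
      ext x
      have := congrFun heq x
      simpa [mul_self_eq_zero] using this
    subst hξ0
    constructor
    · simpa using (integrable_const (0:ℝ) (μ := ν))
    · simp [← hcdef, ← hc]
  · -- main case
    set X : SchwartzDual → ℝ := fun ω => ω ξ with hXdef
    have hXc : Continuous X := WeakDual.eval_continuous ξ
    have hXm : Measurable X := hXc.measurable
    -- characteristic function, real part
    have charCos : ∀ t : ℝ, ∫ ω, Real.cos (t * X ω) ∂ν
        = uGamma ρ (θ + t^2 * c / 2) / uGamma ρ θ := by
      intro t
      have hsm : (∫ x, (t • ξ) x * (t • ξ) x) = t^2 * c := by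
        have : (fun x => (t • ξ) x * (t • ξ) x) = fun x => t^2 * (ξ x * ξ x) := by
          funext x
          simp only [SchwartzMap.smul_apply, smul_eq_mul]
          ring
        rw [this, integral_const_mul]
      simp only [hXdef]
      have h := hchar (t • ξ)
      simp only [_root_.map_smul, smul_eq_mul, hsm] at h
      have hint : Integrable (fun ω : SchwartzDual =>
          Complex.exp (Complex.I * ((t * ω ξ : ℝ) : ℂ))) ν := by
        have hm : AEStronglyMeasurable
            (fun ω : SchwartzDual => Complex.exp (Complex.I * ((t * ω ξ : ℝ) : ℂ))) ν :=
          (Complex.continuous_exp.comp (continuous_const.mul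
            (Complex.continuous_ofReal.comp
              (continuous_const.mul (WeakDual.eval_continuous ξ))))).aestronglyMeasurable
        refine (integrable_const (1:ℝ)).mono' hm ?_
        filter_upwards with ω
        rw [mul_comm]
        exact le_of_eq (Complex.norm_exp_ofReal_mul_I _)
      have hre := integral_re hint
      simp only [RCLike.re_to_complex, mul_comm Complex.I,
        Complex.exp_ofReal_mul_I_re] at hre
      rw [hre]
      simp only [mul_comm Complex.I] at h
      rw [h, Complex.ofReal_re]
    -- the limit L
    set G : ℝ := uGamma ρ θ with hGdef
    set L : ℝ := Real.exp (-θ) * θ^(ρ-1) * c / G with hLdef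
    set A : ℝ → ℝ := fun t => 2 * (1 - uGamma ρ (θ + t^2*c/2) / G) / t^2 with hAdef
    have hA : Tendsto A (nhdsWithin 0 {t : ℝ | t ≠ 0}) (nhds L) := by
      have hder := uGamma_hasDerivAt hρ.2 hθ
      rw [hasDerivAt_iff_tendsto_slope] at hder
      set q : ℝ → ℝ := fun t => θ + t^2*c/2 with hqdef
      have hq : Tendsto q (nhdsWithin 0 {t : ℝ | t ≠ 0}) (nhdsWithin θ {y | y ≠ θ}) := by
        apply tendsto_nhdsWithin_of_tendsto_nhds_of_eventually_within
        · have : Continuous q := by continuity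
          have h0 : q 0 = θ := by simp [hqdef]
          exact (h0 ▸ this.tendsto 0).mono_left nhdsWithin_le_nhds
        · filter_upwards [self_mem_nhdsWithin] with t ht
          have : 0 < t^2*c/2 := by
            have : (0:ℝ) < t^2 := by positivity
            positivity
          simp only [Set.mem_setOf_eq, hqdef]
          linarith
      have hslope := hder.comp hq
      have hc2 : Tendsto (fun t => -(slope (uGamma ρ) θ (q t)) * c / G)
          (nhdsWithin 0 {t : ℝ | t ≠ 0}) (nhds L) := by
        have : Tendsto (fun t => slope (uGamma ρ) θ (q t))
            (nhdsWithin 0 {t : ℝ | t ≠ 0}) (nhds (-(Real.exp (-θ) * θ ^ (ρ - 1)))) := hslope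
        have h3 := ((this.neg).mul_const c).div_const G
        convert h3 using 2
        rw [hLdef]
        ring
      refine hc2.congr' ?_
      filter_upwards [self_mem_nhdsWithin] with t ht
      have ht2 : (0:ℝ) < t^2 := by positivity
      rw [slope_def_field, hAdef]
      simp only [hqdef]
      have hq' : θ + t^2*c/2 - θ = t^2*c/2 := by ring
      rw [hq']
      field_simp
      ring
    -- the sequence
    set u : ℕ → ℝ := fun n => 1 / (n+1 : ℝ) with hudef
    have hupos : ∀ n, 0 < u n := fun n => by positivity
    have hu : Tendsto u atTop (nhdsWithin 0 {t : ℝ | t ≠ 0}) := by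
      apply tendsto_nhdsWithin_of_tendsto_nhds_of_eventually_within
      · exact tendsto_one_div_add_atTop_nhds_zero_nat
      · filter_upwards with n
        exact (hupos n).ne'
    have haL : Tendsto (fun n => A (u n)) atTop (nhds L) := hA.comp hu
    -- g n
    set g : ℕ → SchwartzDual → ℝ :=
      fun n ω => 2 * (1 - Real.cos (u n * X ω)) / (u n)^2 with hgdef
    have hgm : ∀ n, Measurable (g n) := by
      intro n
      exact ((measurable_const.sub ((Real.continuous_cos.measurable).comp
        ((measurable_const.mul hXm)))).const_mul 2).div_const _
    have hgnonneg : ∀ n ω, 0 ≤ g n ω := by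
      intro n ω
      have := one_sub_cos_nonneg (u n * X ω)
      have h2 := (hupos n)
      positivity
    have hgle : ∀ n ω, g n ω ≤ (X ω)^2 := by
      intro n ω
      have h1 := one_sub_cos_le (u n * X ω)
      have h2 : (0:ℝ) < (u n)^2 := by have := hupos n; positivity
      rw [hgdef, div_le_iff₀ h2]
      calc 2 * (1 - Real.cos (u n * X ω)) ≤ 2 * ((u n * X ω)^2 / 2) := by linarith
        _ = (X ω)^2 * (u n)^2 := by ring
    have hgint : ∀ n, Integrable (g n) ν := by
      intro n
      have hcos : Integrable (fun ω => Real.cos (u n * X ω)) ν := by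
        refine (integrable_const (1:ℝ)).mono'
          ((Real.continuous_cos.comp (continuous_const.mul hXc)).aestronglyMeasurable) ?_
        filter_upwards with ω
        simp [Real.abs_cos_le_one]
      exact (((integrable_const (1:ℝ)).sub hcos).const_mul 2).div_const _
    have hgA : ∀ n, ∫ ω, g n ω ∂ν = A (u n) := by
      intro n
      have hcos : Integrable (fun ω => Real.cos (u n * X ω)) ν := by
        refine (integrable_const (1:ℝ)).mono'
          ((Real.continuous_cos.comp (continuous_const.mul hXc)).aestronglyMeasurable) ?_
        filter_upwards with ω
        simp [Real.abs_cos_le_one]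
      rw [hgdef]
      simp only
      rw [integral_div, integral_const_mul, integral_sub (integrable_const 1) hcos,
        integral_const, charCos (u n)]
      simp [hAdef, hGdef, measure_univ]
    -- pointwise convergence
    have hpt : ∀ ω, Tendsto (fun n => g n ω) atTop (nhds ((X ω)^2)) := by
      intro ω
      rcases eq_or_ne (X ω) 0 with hv | hv
      · have : (fun n => g n ω) = fun _ => 0 := by
          funext n
          simp [hgdef, hv]
        rw [this, hv]
        simpa using tendsto_const_nhds
      · have hs : Tendsto (fun n => u n * X ω / 2) atTop (nhdsWithin 0 {t : ℝ | t ≠ 0}) := by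
          apply tendsto_nhdsWithin_of_tendsto_nhds_of_eventually_within
          · have h0 : Tendsto u atTop (nhds 0) := tendsto_one_div_add_atTop_nhds_zero_nat
            have h1 := (h0.mul_const (X ω)).div_const 2
            have h2 : (0 : ℝ) * X ω / 2 = 0 := by ring
            exact h2 ▸ h1
          · filter_upwards with n
            show u n * X ω / 2 ≠ 0
            exact div_ne_zero (mul_ne_zero (hupos n).ne' hv) two_ne_zero
        have hsin := tendsto_sin_div'.comp hs
        have hmain : Tendsto (fun n => (Real.sin (u n * X ω / 2) / (u n * X ω / 2))^2 * (X ω)^2)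
            atTop (nhds ((X ω)^2)) := by
          have := (hsin.pow 2).mul_const ((X ω)^2)
          simpa using this
        refine hmain.congr fun n => ?_
        have hun := (hupos n).ne'
        rw [hgdef]
        simp only
        rw [one_sub_cos_eq]
        field_simp
    -- Fatou: integrability of X^2
    have hX2m : Measurable fun ω => (X ω)^2 := hXm.pow_const 2
    have hfatou : ∫⁻ ω, ENNReal.ofReal ((X ω)^2) ∂ν ≤ ENNReal.ofReal L := by
      have h1 : ∫⁻ ω, ENNReal.ofReal ((X ω)^2) ∂ν
          = ∫⁻ ω, liminf (fun n => ENNReal.ofReal (g n ω)) atTop ∂ν := by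
        refine lintegral_congr fun ω => ?_
        exact ((ENNReal.continuous_ofReal.tendsto _).comp (hpt ω)).liminf_eq.symm
      rw [h1]
      calc ∫⁻ ω, liminf (fun n => ENNReal.ofReal (g n ω)) atTop ∂ν
          ≤ liminf (fun n => ∫⁻ ω, ENNReal.ofReal (g n ω) ∂ν) atTop :=
            lintegral_liminf_le fun n => ENNReal.measurable_ofReal.comp (hgm n)
        _ = liminf (fun n => ENNReal.ofReal (A (u n))) atTop := by
            refine liminf_congr ?_
            filter_upwards with n
            rw [← ofReal_integral_eq_lintegral_ofReal (hgint n)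
              (by filter_upwards with ω; exact hgnonneg n ω), hgA n]
        _ = ENNReal.ofReal L :=
            ((ENNReal.continuous_ofReal.tendsto _).comp haL).liminf_eq
    have hX2int : Integrable (fun ω => (X ω)^2) ν := by
      refine ⟨hX2m.aestronglyMeasurable, ?_⟩
      rw [hasFiniteIntegral_iff_ofReal (by filter_upwards with ω; positivity)]
      exact lt_of_le_of_lt hfatou ENNReal.ofReal_lt_top
    -- dominated convergence
    have hdct : Tendsto (fun n => ∫ ω, g n ω ∂ν) atTop (nhds (∫ ω, (X ω)^2 ∂ν)) := by
      refine tendsto_integral_of_dominated_convergence (fun ω => (X ω)^2)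
        (fun n => (hgm n).aestronglyMeasurable) hX2int ?_ ?_
      · intro n
        filter_upwards with ω
        rw [Real.norm_eq_abs, abs_of_nonneg (hgnonneg n ω)]
        exact hgle n ω
      · filter_upwards with ω
        exact hpt ω
    have hlimit : ∫ ω, (X ω)^2 ∂ν = L := by
      have h1 : Tendsto (fun n => ∫ ω, g n ω ∂ν) atTop (nhds L) := by
        refine haL.congr fun n => (hgA n).symm
      exact tendsto_nhds_unique hdct h1
    refine ⟨hX2int, ?_⟩
    rw [hlimit, hLdef, hGdef]
    ring


theorem stmt_11 (ρ θ : ℝ) (hρ : ρ ∈ Set.Ioc (0 : ℝ) 1) (hθ : 0 < θ)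
    (ν : Measure SchwartzDual) [IsProbabilityMeasure ν]
    (hchar : ∀ ξ : SchwartzMap ℝ ℝ,
        ∫ ω, Complex.exp (Complex.I * ((ω ξ : ℝ) : ℂ)) ∂ν
          = ((uGamma ρ (θ + (∫ x, ξ x * ξ x) / 2) / uGamma ρ θ : ℝ) : ℂ)) :
    (∀ ξ₁ ξ₂ : SchwartzMap ℝ ℝ,
      ∫ ω, (ω ξ₁) * (ω ξ₂) ∂ν
        = θ ^ (ρ - 1) * Real.exp (-θ) / uGamma ρ θ * ∫ x, ξ₁ x * ξ₂ x) ∧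
    (∀ ξ : SchwartzMap ℝ ℝ,
      ∫ ω, (ω ξ) ^ 2 ∂ν
        = θ ^ (ρ - 1) * Real.exp (-θ) * (∫ x, ξ x * ξ x) / uGamma ρ θ) := by
  constructor
  · intro ξ₁ ξ₂
    obtain ⟨hip, hep⟩ := moment_aux ρ θ hρ hθ ν hchar (ξ₁ + ξ₂)
    obtain ⟨him, hem⟩ := moment_aux ρ θ hρ hθ ν hchar (ξ₁ - ξ₂)
    have hfun : (fun ω : SchwartzDual => ω ξ₁ * ω ξ₂)
        = fun ω : SchwartzDual => ((ω (ξ₁+ξ₂))^2 - (ω (ξ₁-ξ₂))^2)/4 := by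
      funext ω
      rw [_root_.map_add, _root_.map_sub]
      ring
    rw [hfun, integral_div, integral_sub hip him, hep, hem]
    have hCp : (∫ x, (ξ₁+ξ₂) x * (ξ₁+ξ₂) x) - (∫ x, (ξ₁-ξ₂) x * (ξ₁-ξ₂) x)
        = 4 * ∫ x, ξ₁ x * ξ₂ x := by
      rw [← integral_sub (prodInt _ _) (prodInt _ _)]
      have h4 : (fun x => (ξ₁+ξ₂) x * (ξ₁+ξ₂) x - (ξ₁-ξ₂) x * (ξ₁-ξ₂) x)
          = fun x => 4 * (ξ₁ x * ξ₂ x) := by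
        funext x
        simp only [SchwartzMap.add_apply, SchwartzMap.sub_apply]
        ring
      rw [h4, integral_const_mul]
    linear_combination (θ ^ (ρ - 1) * Real.exp (-θ) / uGamma ρ θ / 4) * hCp
  · intro ξ
    obtain ⟨_, he⟩ := moment_aux ρ θ hρ hθ ν hchar ξ
    rw [he]
    ring
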